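/- Let p < ℓ be real numbers and let (A_N), (B_N) be real sequences with A_N/N² → A₂ ∈ ℝ and B_N/N → B₁ > 0. If −A₂/B₁² > ℓ, then lim_{N→∞} I_{p,ℓ}(A_N, B_N) · e^{−f_N(ℓ)} = 1, where f_N(k) = k A_N + k² B_N²/2. (Equivalently, I_{p,ℓ}(A_N,B_N) ≈ e^{f_N(ℓ)} G(−A_N/B_N − ℓ B_N) at leading order, the argument of G tending to +∞.) -/

import Mathlib

open MeasureTheory Real Filter

/-- The standard Gaussian density `φ(v) = e^{-v²/2}/√(2π)` on `ℝ`. -/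
noncomputable def gaussPDF (v : ℝ) : ℝ := Real.exp (-v ^ 2 / 2) / Real.sqrt (2 * Real.pi)

/-- `I_{p,ℓ}(A,B) = ∫_ℝ φ(v) (1 + e^{A+Bv})^{p-ℓ} e^{ℓ(A+Bv)} dv`. -/
noncomputable def Iint (p ℓ A B : ℝ) : ℝ :=
  ∫ v : ℝ, gaussPDF v * (1 + Real.exp (A + B * v)) ^ (p - ℓ) * Real.exp (ℓ * (A + B * v))

/-- `f_N(k) = k A_N + k² B_N²/2`. -/
noncomputable def fExp (A B k : ℝ) : ℝ := k * A + k ^ 2 * B ^ 2 / 2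

/-!
Shifting the variable by `ℓ B` (completing the square) turns `I_{p,ℓ}(A, B) e^{-f(ℓ)}` into the
Gaussian average of `(1 + e^{A + B(u + ℓB)})^{p-ℓ}`. Since `A_N + ℓ B_N² ~ N² (A₂ + ℓ B₁²)` with
`A₂ + ℓ B₁² < 0`, the exponent tends to `-∞` for every `u`, so the integrand tends to `φ(u)`; it is
dominated by `φ` because `p - ℓ < 0`.
-/

lemma gaussPDF_nonneg (v : ℝ) : 0 ≤ gaussPDF v := by
  unfold gaussPDF; positivity

lemma gaussPDF_eq (v : ℝ) : gaussPDF v = rexp (-(1 / 2) * v ^ 2) / √(2 * π) := by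
  unfold gaussPDF; ring_nf

lemma gaussPDF_continuous : Continuous gaussPDF := by
  unfold gaussPDF; fun_prop

lemma gaussPDF_integrable : Integrable gaussPDF := by
  rw [show gaussPDF = _ from funext gaussPDF_eq]
  exact (integrable_exp_neg_mul_sq (by norm_num)).div_const _

lemma integral_gaussPDF : ∫ v, gaussPDF v = 1 := by
  simp_rw [gaussPDF_eq]
  rw [integral_div, integral_gaussian, show π / (1 / 2) = 2 * π by ring]
  exact div_self (Real.sqrt_ne_zero'.mpr (by positivity))

lemma gaussPDF_mul_exp_mul_exp_neg_fExp (a b ℓ v : ℝ) :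
    gaussPDF v * rexp (ℓ * (a + b * v)) * rexp (-fExp a b ℓ) = gaussPDF (v - ℓ * b) := by
  unfold gaussPDF fExp
  rw [div_mul_eq_mul_div, div_mul_eq_mul_div, ← exp_add, ← exp_add]
  congr 2; ring

lemma Iint_mul_exp_neg_fExp (p ℓ a b : ℝ) :
    Iint p ℓ a b * rexp (-fExp a b ℓ) =
      ∫ u, gaussPDF u * (1 + rexp (a + b * (u + ℓ * b))) ^ (p - ℓ) := by
  have hshift : ∀ v, gaussPDF v * (1 + rexp (a + b * v)) ^ (p - ℓ) * rexp (ℓ * (a + b * v)) *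
      rexp (-fExp a b ℓ) = gaussPDF (v - ℓ * b) * (1 + rexp (a + b * v)) ^ (p - ℓ) := fun v => by
    rw [← gaussPDF_mul_exp_mul_exp_neg_fExp a b ℓ v]; ring
  rw [Iint, ← integral_mul_const]
  simp_rw [hshift]
  rw [← integral_sub_right_eq_self
    (fun u => gaussPDF u * (1 + rexp (a + b * (u + ℓ * b))) ^ (p - ℓ)) (ℓ * b)]
  simp only [sub_add_cancel]

lemma tendsto_one_add_exp_rpow {ι : Type*} {l : Filter ι} {x : ι → ℝ}
    (hx : Tendsto x l atBot) (q : ℝ) : Tendsto (fun i => (1 + rexp (x i)) ^ q) l (nhds 1) := by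
  have h : Tendsto (fun i => 1 + rexp (x i)) l (nhds 1) := by
    simpa using tendsto_const_nhds.add (tendsto_exp_atBot.comp hx)
  simpa [Function.comp_def] using (continuousAt_rpow_const 1 q (Or.inl one_ne_zero)).tendsto.comp h

lemma tendsto_integral_gaussPDF_mul_one_add_exp_rpow {ι : Type*} {l : Filter ι}
    [l.IsCountablyGenerated] {x : ι → ℝ → ℝ} (hmeas : ∀ i, Measurable (x i))
    (hx : ∀ u, Tendsto (fun i => x i u) l atBot) {q : ℝ} (hq : q ≤ 0) :
    Tendsto (fun i => ∫ u, gaussPDF u * (1 + rexp (x i u)) ^ q) l (nhds 1) := by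
  rw [show (nhds (1 : ℝ)) = nhds (∫ v, gaussPDF v) by rw [integral_gaussPDF]]
  refine tendsto_integral_filter_of_dominated_convergence gaussPDF
    (Eventually.of_forall fun i => ?_) (Eventually.of_forall fun i => ?_) gaussPDF_integrable
    (ae_of_all _ fun u => by simpa using (tendsto_one_add_exp_rpow (hx u) q).const_mul (gaussPDF u))
  · exact (gaussPDF_continuous.measurable.mul (by fun_prop)).aestronglyMeasurable
  · refine ae_of_all _ fun u => ?_
    have hle : (1 + rexp (x i u)) ^ q ≤ 1 :=
      rpow_le_one_of_one_le_of_nonpos (by linarith [exp_pos (x i u)]) hq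
    rw [norm_of_nonneg (mul_nonneg (gaussPDF_nonneg u) (rpow_nonneg (by positivity) q))]
    exact mul_le_of_le_one_right (gaussPDF_nonneg u) hle

lemma tendsto_add_mul_add_mul_atBot {A B : ℕ → ℝ} {A₂ B₁ ℓ : ℝ}
    (hA : Tendsto (fun N : ℕ => A N / (N : ℝ) ^ 2) atTop (nhds A₂))
    (hB : Tendsto (fun N : ℕ => B N / (N : ℝ)) atTop (nhds B₁))
    (hneg : A₂ + ℓ * B₁ ^ 2 < 0) (u : ℝ) :
    Tendsto (fun N : ℕ => A N + B N * (u + ℓ * B N)) atTop atBot := by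
  have hu : Tendsto (fun N : ℕ => u / (N : ℝ)) atTop (nhds 0) :=
    tendsto_const_nhds.div_atTop tendsto_natCast_atTop_atTop
  have hlim : Tendsto (fun N : ℕ => A N / (N : ℝ) ^ 2 + B N / N * (u / N) + ℓ * (B N / N) ^ 2)
      atTop (nhds (A₂ + ℓ * B₁ ^ 2)) := by
    simpa using (hA.add (hB.mul hu)).add ((hB.pow 2).const_mul ℓ)
  have hsq : Tendsto (fun N : ℕ => (N : ℝ) ^ 2) atTop atTop :=
    (tendsto_pow_atTop two_ne_zero).comp tendsto_natCast_atTop_atTop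
  refine (hsq.atTop_mul_neg hneg hlim).congr' ?_
  filter_upwards [eventually_ne_atTop 0] with N hN
  have hN0 : (N : ℝ) ≠ 0 := Nat.cast_ne_zero.mpr hN
  field_simp
  ring

/-- Third case of Proposition S1: for `p < ℓ` and `-A₂/B₁² > ℓ`,
`I_{p,ℓ}(A_N, B_N) ≈ e^{f_N(ℓ)}` at leading order. -/
theorem Iint_asymptotics_ell (p ℓ A₂ B₁ : ℝ) (hpl : p < ℓ) (A B : ℕ → ℝ)
    (hA : Tendsto (fun N : ℕ => A N / (N : ℝ) ^ 2) atTop (nhds A₂))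
    (hB : Tendsto (fun N : ℕ => B N / (N : ℝ)) atTop (nhds B₁))
    (hB₁ : 0 < B₁) (h1 : -A₂ / B₁ ^ 2 > ℓ) :
    Tendsto (fun N : ℕ => Iint p ℓ (A N) (B N) * Real.exp (-(fExp (A N) (B N) ℓ)))
      atTop (nhds 1) := by
  have hneg : A₂ + ℓ * B₁ ^ 2 < 0 := by
    have := (lt_div_iff₀ (by positivity)).mp h1
    linarith
  simp_rw [Iint_mul_exp_neg_fExp]
  exact tendsto_integral_gaussPDF_mul_one_add_exp_rpow (fun N => by fun_prop)
    (tendsto_add_mul_add_mul_atBot hA hB hneg) (by linarith)
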